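/- arXiv:1512.00775 — 2 statements merged into one kernel-verified Lean document; each statement's English description precedes it below -/
import Mathlib

section
/- Let B and D be orthogonal projections on ℂ^N. For any unit vector f, if α = ‖Df‖ and β = ‖Bf‖ then arccos(α) + arccos(β) ≥ arccos(σ_max(BD)), where σ_max(BD) denotes the largest singular value of BD. -/
open Matrix

/-- The operator (spectral) norm of a complex matrix, i.e. its largest singular value. -/
noncomputable def opNorm {N : ℕ} (M : Matrix (Fin N) (Fin N) ℂ) : ℝ :=
  ‖Matrix.toEuclideanCLM (𝕜 := ℂ) M‖

/-- The Euclidean (ℓ²) norm of a vector in ℂ^N. -/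
noncomputable def euclVecNorm {N : ℕ} (x : Fin N → ℂ) : ℝ :=
  ‖(EuclideanSpace.equiv (Fin N) ℂ).symm x‖

/-!
Write `p x` and `q x` for the projections of the unit vector `x`. Since `⟪x, p x⟫ = ‖p x‖²`,
the angle between `x` and `p x` is `arccos ‖p x‖`, and likewise for `q`. On the other hand
`⟪p x, q x⟫ = ⟪(q * p) (p x), q x⟫`, so the cosine of the angle between `p x` and `q x` is
at most `‖q * p‖`. The triangle inequality for angles between vectors concludes. No case
split on `p x = 0` or `q x = 0` is needed: since `0 / 0 = 0`, the angle with the zero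
vector is `π / 2 = arccos 0`.
-/

open Real InnerProductGeometry RCLike

namespace IsStarProjection

variable {𝕜 E : Type*} [RCLike 𝕜] [NormedAddCommGroup E] [InnerProductSpace 𝕜 E]
  [CompleteSpace E]

lemma apply_apply {p : E →L[𝕜] E} (hp : IsStarProjection p) (x : E) : p (p x) = p x :=
  DFunLike.congr_fun hp.isIdempotentElem.eq x

lemma inner_apply_left {p : E →L[𝕜] E} (hp : IsStarProjection p) (x y : E) :
    inner 𝕜 (p x) y = inner 𝕜 x (p y) :=
  hp.isSelfAdjoint.isSymmetric x y

lemma inner_apply_right_eq_norm_sq {p : E →L[𝕜] E} (hp : IsStarProjection p) (x : E) :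
    inner 𝕜 x (p x) = (‖p x‖ : 𝕜) ^ 2 := by
  rw [← inner_self_eq_norm_sq_to_K, hp.inner_apply_left, hp.apply_apply]

lemma re_inner_apply_apply_le_norm_mul {p q : E →L[𝕜] E} (hp : IsStarProjection p)
    (hq : IsStarProjection q) (x : E) :
    re (inner 𝕜 (p x) (q x)) ≤ ‖q * p‖ * (‖p x‖ * ‖q x‖) := by
  have h : inner 𝕜 (p x) (q x) = inner 𝕜 ((q * p) (p x)) (q x) := by
    rw [mul_apply_eq_comp, hp.apply_apply, hq.inner_apply_left, hq.apply_apply]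
  calc re (inner 𝕜 (p x) (q x)) ≤ ‖(q * p) (p x)‖ * ‖q x‖ := h ▸ re_inner_le_norm _ _
    _ ≤ ‖q * p‖ * ‖p x‖ * ‖q x‖ := by gcongr; exact (q * p).le_opNorm _
    _ = ‖q * p‖ * (‖p x‖ * ‖q x‖) := mul_assoc _ _ _

theorem arccos_opNorm_mul_le {p q : E →L[𝕜] E} (hp : IsStarProjection p)
    (hq : IsStarProjection q) {x : E} (hx : ‖x‖ = 1) :
    arccos ‖q * p‖ ≤ arccos ‖p x‖ + arccos ‖q x‖ := by
  let := InnerProductSpace.rclikeToReal 𝕜 E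
  have angle_apply {r : E →L[𝕜] E} (hr : IsStarProjection r) :
      angle x (r x) = arccos ‖r x‖ := by
    rw [angle, real_inner_eq_re_inner 𝕜, hr.inner_apply_right_eq_norm_sq, hx, one_mul,
      ← ofReal_pow, ofReal_re, sq, mul_self_div_self]
  calc arccos ‖q * p‖ ≤ angle (p x) (q x) :=
        arccos_le_arccos (div_le_of_le_mul₀ (by positivity) (norm_nonneg _)
          (hp.re_inner_apply_apply_le_norm_mul hq x))
    _ ≤ angle (p x) x + angle x (q x) := angle_le_angle_add_angle _ _ _
    _ = arccos ‖p x‖ + arccos ‖q x‖ := by rw [angle_comm, angle_apply hp, angle_apply hq]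

end IsStarProjection

theorem stmt6_general (N : ℕ) (B D : Matrix (Fin N) (Fin N) ℂ)
    (hB : Bᴴ = B ∧ B * B = B) (hD : Dᴴ = D ∧ D * D = D)
    (f : Fin N → ℂ) (hf : euclVecNorm f = 1) (α β : ℝ)
    (hα : α = euclVecNorm (D.mulVec f)) (hβ : β = euclVecNorm (B.mulVec f)) :
    Real.arccos α + Real.arccos β ≥ Real.arccos (opNorm (B * D)) := by
  have hproj {P : Matrix (Fin N) (Fin N) ℂ} (hP : Pᴴ = P ∧ P * P = P) :
      IsStarProjection (toEuclideanCLM (𝕜 := ℂ) P) :=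
    (isStarProjection_iff'.mpr ⟨hP.2, hP.1⟩).map _
  rw [hα, hβ, opNorm, map_mul]
  exact IsStarProjection.arccos_opNorm_mul_le (hproj hD) (hproj hB) hf

theorem stmt6 (N : ℕ) (hN : 0 < N) (B D : Matrix (Fin N) (Fin N) ℂ)
    (hB : Bᴴ = B ∧ B * B = B) (hD : Dᴴ = D ∧ D * D = D)
    (f : Fin N → ℂ) (hf : euclVecNorm f = 1) (α β : ℝ)
    (hα : α = euclVecNorm (D.mulVec f)) (hβ : β = euclVecNorm (B.mulVec f)) :
    Real.arccos α + Real.arccos β ≥ Real.arccos (opNorm (B * D)) :=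
  stmt6_general N B D hB hD f hf α β hα hβ
end

section
/- Let B and D be orthogonal projections on ℂ^N, with B = U Σ_F U^H for a unitary U and 0/1 diagonal Σ_F, and D = Diag(1_S). Then ‖B D̄‖₂ < 1 (where D̄ = I − D) if and only if the |S| × |F| submatrix G of U obtained by keeping the rows indexed by S and the columns indexed by F has full column rank |F|. -/
/-!
`B` and `1 - D` are orthogonal projections, so `‖B (1 - D)‖ ≤ 1`; as the operator norm is attained
on the unit ball of `ℂ^N`, equality holds exactly when some nonzero vector is fixed by both, i.e.
when `range B ∩ ker D ≠ 0`. Writing such a vector as `x = U y`, `B x = x` says that `y` is supported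
on `F`, and then `D x = 0` says `G (y|_F) = 0`. So the intersection is trivial iff `G` is injective,
i.e. iff `rank G = |F|`.
-/

open Matrix

open Metric in
theorem ContinuousLinearMap.exists_norm_le_one_norm_apply_eq_opNorm {𝕜 E F : Type*}
    [DenselyNormedField 𝕜] [LocallyCompactSpace 𝕜] [NormedAddCommGroup E] [NormedSpace 𝕜 E]
    [FiniteDimensional 𝕜 E] [SeminormedAddCommGroup F] [NormedSpace 𝕜 F] (f : E →L[𝕜] F) :
    ∃ x, ‖x‖ ≤ 1 ∧ ‖f x‖ = ‖f‖ := by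
  have : ProperSpace E := FiniteDimensional.proper 𝕜 E
  have hK : IsCompact ((fun x => ‖f x‖) '' closedBall (0 : E) 1) :=
    (isCompact_closedBall 0 1).image (by fun_prop)
  obtain ⟨x, hx, hfx⟩ := hK.sSup_mem ((nonempty_closedBall.mpr zero_le_one).image _)
  exact ⟨x, mem_closedBall_zero_iff.mp hx, hfx.trans f.sSup_unitClosedBall_eq_norm⟩

theorem Submodule.norm_starProjection_mul_starProjection_lt_one_iff {𝕜 E : Type*} [RCLike 𝕜]
    [NormedAddCommGroup E] [InnerProductSpace 𝕜 E] [FiniteDimensional 𝕜 E]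
    (K L : Submodule 𝕜 E) :
    ‖K.starProjection * L.starProjection‖ < 1 ↔ Disjoint K L := by
  rw [Submodule.disjoint_def]
  constructor
  · intro h x hxK hxL
    by_contra hx
    have hle := (K.starProjection * L.starProjection).le_opNorm x
    rw [mul_apply_eq_comp, starProjection_eq_self_iff.mpr hxL,
      starProjection_eq_self_iff.mpr hxK] at hle
    have := mul_lt_mul_of_pos_right h (norm_pos_iff.mpr hx)
    linarith
  · intro h
    obtain ⟨x, hx, hfx⟩ :=
      (K.starProjection * L.starProjection).exists_norm_le_one_norm_apply_eq_opNorm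
    have hKx := K.norm_starProjection_apply_le (L.starProjection x)
    have hLx := L.norm_starProjection_apply_le x
    rw [← hfx, mul_apply_eq_comp]
    refine (hKx.trans (hLx.trans hx)).lt_of_ne fun h1 => ?_
    -- Both projections then preserve the norm of `x`, so `x ∈ L` and then `x ∈ K`.
    have hxL : x ∈ L := (L.mem_iff_norm_starProjection x).mpr (by linarith)
    rw [starProjection_eq_self_iff.mpr hxL] at h1 hKx
    have hxK : x ∈ K := (K.mem_iff_norm_starProjection x).mpr (by linarith)
    simp [h x hxK hxL] at h1

theorem IsStarProjection.mul_mul_star {R : Type*} [Semiring R] [StarRing R] {p u : R}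
    (hp : IsStarProjection p) (hu : star u * u = 1) : IsStarProjection (u * p * star u) where
  isIdempotentElem := by
    simp only [IsIdempotentElem, mul_assoc]
    rw [← mul_assoc (star u), hu, one_mul, ← mul_assoc p, hp.isIdempotentElem.eq]
  isSelfAdjoint := by
    simp only [IsSelfAdjoint, star_mul, star_star, hp.isSelfAdjoint.star_eq, mul_assoc]

namespace Matrix

variable {l m n R : Type*}

section Diagonal

variable [Fintype n] [DecidableEq n] [Semiring R] (s : Finset n)

theorem isStarProjection_diagonal_ite [StarRing R] :
    IsStarProjection (diagonal fun i => if i ∈ s then (1 : R) else 0) where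
  isIdempotentElem := by
    rw [IsIdempotentElem, diagonal_mul_diagonal]
    congr 1; funext i; split_ifs <;> simp
  isSelfAdjoint := by
    rw [IsSelfAdjoint, star_eq_conjTranspose, diagonal_conjTranspose]
    congr 1; funext i; by_cases hi : i ∈ s <;> simp [hi]

theorem diagonal_ite_mulVec_eq_self_iff (v : n → R) :
    (diagonal fun i => if i ∈ s then (1 : R) else 0) *ᵥ v = v ↔ ∀ i ∉ s, v i = 0 := by
  simp only [funext_iff, mulVec_diagonal]
  refine forall_congr' fun i => ?_
  by_cases hi : i ∈ s <;> simp [hi, eq_comm]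

theorem diagonal_ite_mulVec_eq_zero_iff (v : n → R) :
    (diagonal fun i => if i ∈ s then (1 : R) else 0) *ᵥ v = 0 ↔ ∀ i ∈ s, v i = 0 := by
  simp only [funext_iff, mulVec_diagonal]
  refine forall_congr' fun i => ?_
  by_cases hi : i ∈ s <;> simp [hi]

end Diagonal

theorem norm_toEuclideanCLM_mul_lt_one_iff [Fintype n] [DecidableEq n] {𝕜 : Type*} [RCLike 𝕜]
    {P Q : Matrix n n 𝕜} (hP : IsStarProjection P) (hQ : IsStarProjection Q) :
    ‖toEuclideanCLM (𝕜 := 𝕜) (P * Q)‖ < 1 ↔ ∀ v, P *ᵥ v = v → Q *ᵥ v = v → v = 0 := by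
  obtain ⟨K, _, hK⟩ :=
    isStarProjection_iff_eq_starProjection.mp (hP.map (toEuclideanCLM (n := n) (𝕜 := 𝕜)))
  obtain ⟨L, _, hL⟩ :=
    isStarProjection_iff_eq_starProjection.mp (hQ.map (toEuclideanCLM (n := n) (𝕜 := 𝕜)))
  have toLp_mem_iff : ∀ (M : Matrix n n 𝕜) (K : Submodule 𝕜 (EuclideanSpace 𝕜 n))
      [K.HasOrthogonalProjection], toEuclideanCLM (n := n) (𝕜 := 𝕜) M = K.starProjection →
      ∀ v, WithLp.toLp 2 v ∈ K ↔ M *ᵥ v = v := by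
    intro M K _ hM v
    rw [← K.starProjection_eq_self_iff, ← hM, toEuclideanCLM_toLp,
      (WithLp.toLp_injective 2).eq_iff]
  rw [map_mul, hK, hL, Submodule.norm_starProjection_mul_starProjection_lt_one_iff,
    Submodule.disjoint_def, (WithLp.toLp_surjective 2).forall]
  simp only [toLp_mem_iff P K hK, toLp_mem_iff Q L hL, WithLp.toLp_eq_zero]

theorem rank_eq_card_width_iff {K : Type*} [Field K] [Fintype n] (A : Matrix m n K) :
    A.rank = Fintype.card n ↔ ∀ v, A *ᵥ v = 0 → v = 0 := by
  rw [← ker_mulVecLin_eq_bot_iff, ← Submodule.finrank_eq_zero, rank,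
    ← Module.finrank_fintype_fun_eq_card (R := K)]
  have := LinearMap.finrank_range_add_finrank_ker A.mulVecLin
  omega

section Submatrix

variable [Fintype n] [Semiring R] (A : Matrix m n R) (r : l → m)

theorem submatrix_mulVec_of_forall_notMem_eq_zero {t : Finset n} {y : n → R}
    (hy : ∀ j ∉ t, y j = 0) :
    A.submatrix r ((↑) : t → n) *ᵥ (fun j => y j) = fun i => (A *ᵥ y) (r i) := by
  funext i
  simp only [mulVec, dotProduct, submatrix_apply]
  rw [Finset.sum_coe_sort t fun j => A (r i) j * y j]
  exact Finset.sum_subset (Finset.subset_univ t) fun j _ hj => by simp [hy j hj]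

theorem forall_submatrix_mulVec_eq_zero_imp_iff (t : Finset n) :
    (∀ w, A.submatrix r ((↑) : t → n) *ᵥ w = 0 → w = 0) ↔
      ∀ y : n → R, (∀ j ∉ t, y j = 0) → (∀ i, (A *ᵥ y) (r i) = 0) → y = 0 := by
  constructor
  · intro h y hy hAy
    have hw := h (fun j => y j) <| by
      rw [A.submatrix_mulVec_of_forall_notMem_eq_zero r hy]
      exact funext hAy
    funext j
    by_cases hj : j ∈ t
    · exact congrFun hw ⟨j, hj⟩
    · exact hy j hj
  · classical
    intro h w hw
    set y : n → R := fun j => if hj : j ∈ t then w ⟨j, hj⟩ else 0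
    have hy : ∀ j ∉ t, y j = 0 := fun j hj => by simp [y, hj]
    have hwy : (fun j : t => y j) = w := funext fun j => by simp [y]
    have hy0 := h y hy fun i => by
      rw [← congrFun (A.submatrix_mulVec_of_forall_notMem_eq_zero r hy) i, hwy, hw]
      rfl
    rw [← hwy, hy0]
    rfl

end Submatrix

end Matrix

theorem stmt13_general (N : ℕ) (U : Matrix (Fin N) (Fin N) ℂ)
    (hU : U * Uᴴ = 1 ∧ Uᴴ * U = 1) (F S : Finset (Fin N))
    (B D : Matrix (Fin N) (Fin N) ℂ)
    (hB : B = U * Matrix.diagonal (fun i => if i ∈ F then (1 : ℂ) else 0) * Uᴴ)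
    (hD : D = Matrix.diagonal (fun i => if i ∈ S then (1 : ℂ) else 0))
    (G : Matrix {i // i ∈ S} {j // j ∈ F} ℂ)
    (hG : G = U.submatrix (fun i : {i // i ∈ S} => (i : Fin N))
                          (fun j : {j // j ∈ F} => (j : Fin N))) :
    opNorm (B * (1 - D)) < 1 ↔ G.rank = F.card := by
  subst hB hD hG
  have hB : IsStarProjection (U * diagonal (fun i => if i ∈ F then (1 : ℂ) else 0) * Uᴴ) :=
    (isStarProjection_diagonal_ite F).mul_mul_star hU.2
  have hD := (isStarProjection_diagonal_ite (R := ℂ) S).one_sub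
  have hUinj : Function.Injective (U *ᵥ ·) :=
    Function.LeftInverse.injective (g := (Uᴴ *ᵥ ·)) fun y => by simp [mulVec_mulVec, hU.2]
  have hUsurj : Function.Surjective (U *ᵥ ·) :=
    Function.RightInverse.surjective (g := (Uᴴ *ᵥ ·)) fun v => by simp [mulVec_mulVec, hU.1]
  rw [opNorm, norm_toEuclideanCLM_mul_lt_one_iff hB hD, ← Fintype.card_coe F,
    rank_eq_card_width_iff, forall_submatrix_mulVec_eq_zero_imp_iff, hUsurj.forall]
  refine forall_congr' fun y => ?_
  rw [mulVec_mulVec, mul_assoc, mul_assoc, hU.2, mul_one, ← mulVec_mulVec, hUinj.eq_iff,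
    diagonal_ite_mulVec_eq_self_iff, sub_mulVec, one_mulVec, sub_eq_self,
    diagonal_ite_mulVec_eq_zero_iff, hUinj.eq_iff' (mulVec_zero U), Subtype.forall]

theorem stmt13 (N : ℕ) (hN : 0 < N) (U : Matrix (Fin N) (Fin N) ℂ)
    (hU : U * Uᴴ = 1 ∧ Uᴴ * U = 1) (F S : Finset (Fin N))
    (B D : Matrix (Fin N) (Fin N) ℂ)
    (hB : B = U * Matrix.diagonal (fun i => if i ∈ F then (1 : ℂ) else 0) * Uᴴ)
    (hD : D = Matrix.diagonal (fun i => if i ∈ S then (1 : ℂ) else 0))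
    (G : Matrix {i // i ∈ S} {j // j ∈ F} ℂ)
    (hG : G = U.submatrix (fun i : {i // i ∈ S} => (i : Fin N))
                          (fun j : {j // j ∈ F} => (j : Fin N))) :
    opNorm (B * (1 - D)) < 1 ↔ G.rank = F.card :=
  stmt13_general N U hU F S B D hB hD G hG
end
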